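/- arXiv:2602.23792 — 3 statements merged into one kernel-verified Lean document; each statement's English description precedes it below -/
import Mathlib

section
/- Property (2) of Theorem 4.1 (main bound): the total variation distance between the product-of-marginals PMF and the joint PMF is at most n·ε, i.e. Δ_TVD(p,q) = (1/2)·∑_{x : Fin n → V} |p(x) − q(x)| ≤ n·ε. -/
/-!
The total variation distance between two probability vectors is `1 - ∑ₓ min (p x) (q x)`, so it
is at most `1 - min (p x⋆) (q x⋆)` for the single point `x⋆`. Both masses at `x⋆` are at least
`1 - ∑ᵢ εᵢ ≥ 1 - n ε`: for the product of marginals by the Weierstrass product inequality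
`∏ (1 - εᵢ) ≥ 1 - ∑ εᵢ`, and for the joint law by the union bound over the coordinates where
`y` differs from `x⋆`.
-/

open MeasureTheory Finset

theorem one_sub_sum_one_sub_le_prod {ι : Type*} (s : Finset ι) (a : ι → ℝ)
    (h0 : ∀ i ∈ s, 0 ≤ a i) (h1 : ∀ i ∈ s, a i ≤ 1) :
    1 - ∑ i ∈ s, (1 - a i) ≤ ∏ i ∈ s, a i := by
  classical
  induction s using Finset.induction_on with
  | empty => simp
  | insert j s hj ih =>
    rw [sum_insert hj, prod_insert hj]
    have h0j := h0 j (mem_insert_self j s)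
    have ih := ih (fun i hi ↦ h0 i (mem_insert_of_mem hi)) (fun i hi ↦ h1 i (mem_insert_of_mem hi))
    have hS : 0 ≤ ∑ i ∈ s, (1 - a i) :=
      sum_nonneg fun i hi ↦ sub_nonneg.2 (h1 i (mem_insert_of_mem hi))
    calc 1 - ((1 - a j) + ∑ i ∈ s, (1 - a i))
        ≤ a j * (1 - ∑ i ∈ s, (1 - a i)) := by nlinarith [h1 j (mem_insert_self j s)]
      _ ≤ a j * ∏ i ∈ s, a i := mul_le_mul_of_nonneg_left ih h0j

theorem half_sum_abs_sub_le_one_sub_min {β : Type*} [Fintype β] {p q : β → ℝ}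
    (hp0 : ∀ x, 0 ≤ p x) (hq0 : ∀ x, 0 ≤ q x) (hp1 : ∑ x, p x = 1) (hq1 : ∑ x, q x = 1)
    (b : β) : (1 / 2) * ∑ x, |p x - q x| ≤ 1 - min (p b) (q b) := by
  have habs : ∀ x, |p x - q x| = p x + q x - 2 * min (p x) (q x) := fun x ↦ by
    rw [← max_sub_min_eq_abs']; linarith [min_add_max (p x) (q x)]
  have hmin : min (p b) (q b) ≤ ∑ x, min (p x) (q x) :=
    single_le_sum (fun x _ ↦ le_min (hp0 x) (hq0 x)) (mem_univ b)
  simp only [habs, sum_sub_distrib, sum_add_distrib, ← mul_sum, hp1, hq1]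
  linarith

section CoordinateMarginals

variable {ι α : Type*} [MeasurableSpace (ι → α)] [DiscreteMeasurableSpace (ι → α)]
  (μ : Measure (ι → α)) [IsProbabilityMeasure μ]

theorem sum_measureReal_coord_eq_one [Fintype α] (i : ι) : ∑ v, μ.real {y | y i = v} = 1 := by
  have := sum_measureReal_preimage_singleton (μ := μ) univ (f := Function.eval i)
    fun _ _ ↦ MeasurableSet.of_discrete
  simp only [coe_univ, Set.preimage_univ, probReal_univ] at this
  exact this

theorem sum_prod_measureReal_coord_eq_one [Fintype ι] [DecidableEq ι] [Fintype α] :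
    ∑ x : ι → α, ∏ i, μ.real {y | y i = x i} = 1 := by
  rw [← Fintype.prod_sum (fun i v ↦ μ.real {y | y i = v})]
  simp [sum_measureReal_coord_eq_one]

theorem one_sub_sum_one_sub_measureReal_coord_le [Fintype ι] (x : ι → α) :
    1 - ∑ i, (1 - μ.real {y | y i = x i}) ≤ μ.real {x} := by
  have hcompl : {x}ᶜ = ⋃ i, {y : ι → α | y i = x i}ᶜ := by
    ext y; simp [funext_iff]
  have hunion := measureReal_iUnion_fintype_le (μ := μ) fun i ↦ {y : ι → α | y i = x i}ᶜ
  rw [← hcompl, probReal_compl_eq_one_sub MeasurableSet.of_discrete] at hunion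
  simp only [probReal_compl_eq_one_sub MeasurableSet.of_discrete] at hunion
  linarith

end CoordinateMarginals

theorem tvd_le_n_mul_eps_general
    (n : ℕ)
    (V : Type*) [Fintype V]
    [MeasurableSpace (Fin n → V)] [DiscreteMeasurableSpace (Fin n → V)]
    (μ : Measure (Fin n → V)) [IsProbabilityMeasure μ]
    (xstar : Fin n → V)
    (εi : Fin n → ℝ) (hεi : ∀ i, εi i = 1 - (μ {y | y i = xstar i}).toReal)
    (ε : ℝ) (hε : ε = ⨆ i, εi i)
    (p q : (Fin n → V) → ℝ)
    (hp : ∀ x, p x = ∏ i, (μ {y | y i = x i}).toReal)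
    (hq : ∀ x, q x = (μ {x}).toReal) :
    (1 / 2) * ∑ x : Fin n → V, |p x - q x| ≤ (n : ℝ) * ε := by
  have hsum : ∑ i, εi i ≤ n * ε :=
    (sum_le_sum fun i _ ↦ hε ▸ le_ciSup (Set.finite_range εi).bddAbove i).trans_eq (by simp)
  have hεsum : ∑ i, εi i = ∑ i, (1 - μ.real {y | y i = xstar i}) := sum_congr rfl fun i _ ↦ hεi i
  have hp1 : ∑ x, p x = 1 := by
    simp only [hp]; exact sum_prod_measureReal_coord_eq_one μ
  have hq1 : ∑ x, q x = 1 := by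
    simp only [hq, ← measureReal_def, sum_measureReal_singleton, coe_univ, probReal_univ]
  have hpx : 1 - ∑ i, εi i ≤ p xstar := by
    rw [hp, hεsum]
    exact one_sub_sum_one_sub_le_prod _ _ (fun _ _ ↦ measureReal_nonneg)
      fun _ _ ↦ measureReal_le_one
  have hqx : 1 - ∑ i, εi i ≤ q xstar := by
    rw [hq, hεsum]; exact one_sub_sum_one_sub_measureReal_coord_le μ xstar
  calc (1 / 2) * ∑ x, |p x - q x|
      ≤ 1 - min (p xstar) (q xstar) :=
        half_sum_abs_sub_le_one_sub_min (fun x ↦ hp x ▸ prod_nonneg fun _ _ ↦ measureReal_nonneg)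
          (fun x ↦ hq x ▸ measureReal_nonneg) hp1 hq1 xstar
    _ ≤ n * ε := by linarith [le_min hpx hqx]

/-- Theorem 4.1, Property (2) (main bound): the total variation distance between the
product-of-marginals PMF `p` and the joint PMF `q` is at most `n * ε`. -/
theorem tvd_le_n_mul_eps
    (n : ℕ) (hn : 0 < n)
    (V : Type*) [Fintype V] [Nonempty V] [DecidableEq V]
    [MeasurableSpace (Fin n → V)] [DiscreteMeasurableSpace (Fin n → V)]
    (μ : Measure (Fin n → V)) [IsProbabilityMeasure μ]
    (xstar : Fin n → V)
    (εi : Fin n → ℝ) (hεi : ∀ i, εi i = 1 - (μ {y | y i = xstar i}).toReal)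
    (hεi_nonneg : ∀ i, 0 ≤ εi i) (hεi_lt_one : ∀ i, εi i < 1)
    (ε : ℝ) (hε : ε = ⨆ i, εi i)
    (p q : (Fin n → V) → ℝ)
    (hp : ∀ x, p x = ∏ i, (μ {y | y i = x i}).toReal)
    (hq : ∀ x, q x = (μ {x}).toReal) :
    (1 / 2) * ∑ x : Fin n → V, |p x - q x| ≤ (n : ℝ) * ε :=
  tvd_le_n_mul_eps_general n V μ xstar εi hεi ε hε p q hp hq
end

section
/- Sharpened form of Theorem 4.1 Property (2) established in the proof: the total variation distance between the product-of-marginals PMF and the joint PMF is at most the sum of the per-position errors, i.e. Δ_TVD(p,q) ≤ ∑_{i=0}^{n−1} ε_i. -/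
open MeasureTheory Finset

private lemma one_sub_sum_le_prod_one_sub' {ι : Type*} (s : Finset ι) (f : ι → ℝ)
    (h0 : ∀ i, 0 ≤ f i) (h1 : ∀ i, f i ≤ 1) :
    1 - ∑ i ∈ s, f i ≤ ∏ i ∈ s, (1 - f i) := by
  classical
  induction s using Finset.induction_on with
  | empty => simp
  | @insert a s' hx ih =>
    rw [Finset.sum_insert hx, Finset.prod_insert hx]
    have ih' := ih
    have ha0 : 0 ≤ f a := h0 a
    have ha1 : f a ≤ 1 := h1 a
    have hprod : 0 ≤ ∏ i ∈ s', (1 - f i) :=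
      Finset.prod_nonneg fun i hi => by linarith [h1 i]
    nlinarith [Finset.sum_nonneg (s := s') (f := f) fun i _ => h0 i]

/-- Sharpened form of Theorem 4.1, Property (2): the total variation distance between the
product-of-marginals PMF `p` and the joint PMF `q` is at most `∑ i, εi i`. -/
theorem tvd_le_sum_eps
    (n : ℕ) (hn : 0 < n)
    (V : Type*) [Fintype V] [Nonempty V] [DecidableEq V]
    [MeasurableSpace (Fin n → V)] [DiscreteMeasurableSpace (Fin n → V)]
    (μ : Measure (Fin n → V)) [IsProbabilityMeasure μ]
    (xstar : Fin n → V)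
    (εi : Fin n → ℝ) (hεi : ∀ i, εi i = 1 - (μ {y | y i = xstar i}).toReal)
    (hεi_nonneg : ∀ i, 0 ≤ εi i) (hεi_lt_one : ∀ i, εi i < 1)
    (p q : (Fin n → V) → ℝ)
    (hp : ∀ x, p x = ∏ i, (μ {y | y i = x i}).toReal)
    (hq : ∀ x, q x = (μ {x}).toReal) :
    (1 / 2) * ∑ x : Fin n → V, |p x - q x| ≤ ∑ i, εi i := by
  classical
  have hfin : ∀ s : Set (Fin n → V), μ s ≠ ⊤ := fun s => measure_ne_top μ s
  have hle1 : ∀ s : Set (Fin n → V), (μ s).toReal ≤ 1 := fun s => by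
    have := prob_le_one (μ := μ) (s := s)
    calc (μ s).toReal ≤ (1 : ENNReal).toReal :=
          ENNReal.toReal_mono (by simp) this
      _ = 1 := by simp
  have hnn : ∀ s : Set (Fin n → V), 0 ≤ (μ s).toReal := fun s => ENNReal.toReal_nonneg
  -- marginal sums: for each i, ∑ v, μ {y | y i = v} = 1
  have hmarg : ∀ i : Fin n, ∑ v : V, (μ {y | y i = v}).toReal = 1 := by
    intro i
    have h := MeasureTheory.sum_measure_preimage_singleton (μ := μ)
      (Finset.univ : Finset V) (f := fun y => y i)
      (fun v _ => MeasurableSet.of_discrete)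
    have h2 : ∑ v : V, μ {y : Fin n → V | y i = v} = 1 := by
      have : ((fun y : Fin n → V => y i) ⁻¹' (Finset.univ : Finset V)) = Set.univ := by
        ext y; simp
      rw [show (∑ v : V, μ {y : Fin n → V | y i = v})
            = ∑ v ∈ (Finset.univ : Finset V), μ ((fun y => y i) ⁻¹' {v}) from rfl, h, this,
        measure_univ]
    calc ∑ v : V, (μ {y : Fin n → V | y i = v}).toReal
        = (∑ v : V, μ {y : Fin n → V | y i = v}).toReal := by
          rw [ENNReal.toReal_sum (fun v _ => hfin _)]
      _ = 1 := by rw [h2]; simp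
  -- sum of p over all points is 1
  have hpsum : ∑ x : Fin n → V, p x = 1 := by
    have h1 := Finset.prod_univ_sum (t := fun _ : Fin n => (Finset.univ : Finset V))
      (f := fun i v => (μ {y : Fin n → V | y i = v}).toReal)
    rw [Fintype.piFinset_univ] at h1
    calc ∑ x : Fin n → V, p x
        = ∑ x : Fin n → V, ∏ i, (μ {y : Fin n → V | y i = x i}).toReal :=
          Finset.sum_congr rfl fun x _ => hp x
      _ = ∏ i : Fin n, ∑ v : V, (μ {y : Fin n → V | y i = v}).toReal := h1.symm
      _ = 1 := by simp [hmarg]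
  -- sum of q over all points is 1
  have hqsum : ∑ x : Fin n → V, q x = 1 := by
    have h : ∑ x : Fin n → V, μ {x} = 1 := by
      rw [← measure_univ (μ := μ)]
      rw [← MeasureTheory.measure_biUnion_finset
        (by intro a _ b _ hab; simp [Function.onFun, Set.disjoint_singleton, hab])
        (fun x _ => MeasurableSet.of_discrete)]
      congr 1; ext y; simp
    calc ∑ x : Fin n → V, q x = ∑ x : Fin n → V, (μ {x}).toReal := by simp [hq]
      _ = (∑ x : Fin n → V, μ {x}).toReal := by rw [ENNReal.toReal_sum (fun v _ => hfin _)]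
      _ = 1 := by rw [h]; simp
  -- |p - q| = p + q - 2 * min
  have habs : ∀ x, |p x - q x| = p x + q x - 2 * min (p x) (q x) := by
    intro x
    rcases le_total (p x) (q x) with h | h
    · rw [abs_of_nonpos (by linarith), min_eq_left h]; ring
    · rw [abs_of_nonneg (by linarith), min_eq_right h]; ring
  have hsum : ∑ x : Fin n → V, |p x - q x|
      = 2 - 2 * ∑ x : Fin n → V, min (p x) (q x) := by
    simp only [habs]
    rw [Finset.sum_sub_distrib, Finset.sum_add_distrib, hpsum, hqsum, ← Finset.mul_sum]
    ring
  -- min sum lower bound via the point xstar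
  have hminx : min (p xstar) (q xstar) ≤ ∑ x : Fin n → V, min (p x) (q x) := by
    apply Finset.single_le_sum (f := fun x => min (p x) (q x))
    · intro x _
      exact le_min (by rw [hp]; exact Finset.prod_nonneg fun i _ => hnn _)
        (by rw [hq]; exact hnn _)
    · exact Finset.mem_univ _
  -- p xstar ≥ 1 - ∑ εi
  have hpstar : 1 - ∑ i, εi i ≤ p xstar := by
    rw [hp]
    have : ∀ i, (μ {y : Fin n → V | y i = xstar i}).toReal = 1 - εi i := by
      intro i; rw [hεi i]; ring
    calc 1 - ∑ i, εi i ≤ ∏ i, (1 - εi i) :=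
          one_sub_sum_le_prod_one_sub' Finset.univ εi hεi_nonneg
            (fun i => le_of_lt (hεi_lt_one i))
      _ = ∏ i, (μ {y : Fin n → V | y i = xstar i}).toReal := by
          exact Finset.prod_congr rfl fun i _ => (this i).symm
  -- q xstar ≥ 1 - ∑ εi (union bound)
  have hqstar : 1 - ∑ i, εi i ≤ q xstar := by
    rw [hq]
    have hcompl : ({xstar} : Set (Fin n → V))ᶜ = ⋃ i, {y : Fin n → V | y i ≠ xstar i} := by
      ext y
      simp only [Set.mem_compl_iff, Set.mem_singleton_iff, Set.mem_iUnion, Set.mem_setOf_eq]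
      constructor
      · intro h; by_contra hc; push_neg at hc; exact h (funext hc)
      · rintro ⟨i, hi⟩ rfl; exact hi rfl
    have hub : μ ({xstar} : Set (Fin n → V))ᶜ ≤ ∑ i, μ {y : Fin n → V | y i ≠ xstar i} := by
      rw [hcompl]; exact measure_iUnion_fintype_le μ _
    have hcompl_i : ∀ i, (μ {y : Fin n → V | y i ≠ xstar i}).toReal = εi i := by
      intro i
      have : {y : Fin n → V | y i ≠ xstar i} = {y : Fin n → V | y i = xstar i}ᶜ := rfl
      rw [this, prob_compl_eq_one_sub MeasurableSet.of_discrete,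
        ENNReal.toReal_sub_of_le (prob_le_one) (by simp), hεi i]
      simp
    have hub' : (μ ({xstar} : Set (Fin n → V))ᶜ).toReal ≤ ∑ i, εi i := by
      calc (μ ({xstar} : Set (Fin n → V))ᶜ).toReal
          ≤ (∑ i, μ {y : Fin n → V | y i ≠ xstar i}).toReal :=
            ENNReal.toReal_mono (by
              refine (ENNReal.sum_lt_top.mpr ?_).ne
              intro i _; exact (hfin _).lt_top) hub
        _ = ∑ i, (μ {y : Fin n → V | y i ≠ xstar i}).toReal :=
            ENNReal.toReal_sum (fun i _ => hfin _)
        _ = ∑ i, εi i := Finset.sum_congr rfl fun i _ => hcompl_i i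
    have hm : (μ ({xstar} : Set (Fin n → V))).toReal
        = 1 - (μ ({xstar} : Set (Fin n → V))ᶜ).toReal := by
      rw [prob_compl_eq_one_sub MeasurableSet.of_discrete,
        ENNReal.toReal_sub_of_le (prob_le_one) (by simp)]
      simp
    rw [hm]; linarith
  -- conclude
  have : min (p xstar) (q xstar) ≥ 1 - ∑ i, εi i := le_min hpstar hqstar
  rw [hsum]
  nlinarith [hminx]
end

section
/- Pointwise quantitative version of Theorem 4.1 Property (1): for every trajectory x : Fin n → V, the discrepancy between the product-of-marginals PMF and the joint PMF satisfies |p(x) − q(x)| ≤ n·ε. -/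
open MeasureTheory Finset

/-- Weierstrass-type inequality: `1 - ∑ f i ≤ ∏ (1 - f i)` for `f i ∈ [0,1]`. -/
lemma aux_one_sub_sum_le_prod_one_sub {ι : Type*} (s : Finset ι) (f : ι → ℝ)
    (h0 : ∀ i ∈ s, 0 ≤ f i) (h1 : ∀ i ∈ s, f i ≤ 1) :
    1 - ∑ i ∈ s, f i ≤ ∏ i ∈ s, (1 - f i) := by
  classical
  induction s using Finset.induction with
  | empty => simp
  | @insert a s' hx ih =>
    rw [Finset.sum_insert hx, Finset.prod_insert hx]
    have ha0 := h0 a (Finset.mem_insert_self a s')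
    have ha1 := h1 a (Finset.mem_insert_self a s')
    have ih' := ih (fun i hi => h0 i (Finset.mem_insert_of_mem hi))
      (fun i hi => h1 i (Finset.mem_insert_of_mem hi))
    have hsum : 0 ≤ ∑ i ∈ s', f i := Finset.sum_nonneg fun i hi =>
      h0 i (Finset.mem_insert_of_mem hi)
    nlinarith [ih']

/-- Pointwise quantitative version of Theorem 4.1, Property (1): for every trajectory `x`,
`|p x - q x| ≤ n * ε`. -/
theorem abs_p_sub_q_le_n_mul_eps
    (n : ℕ) (hn : 0 < n)
    (V : Type*) [Fintype V] [Nonempty V] [DecidableEq V]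
    [MeasurableSpace (Fin n → V)] [DiscreteMeasurableSpace (Fin n → V)]
    (μ : Measure (Fin n → V)) [IsProbabilityMeasure μ]
    (xstar : Fin n → V)
    (εi : Fin n → ℝ) (hεi : ∀ i, εi i = 1 - (μ {y | y i = xstar i}).toReal)
    (hεi_nonneg : ∀ i, 0 ≤ εi i) (hεi_lt_one : ∀ i, εi i < 1)
    (ε : ℝ) (hε : ε = ⨆ i, εi i)
    (p q : (Fin n → V) → ℝ)
    (hp : ∀ x, p x = ∏ i, (μ {y | y i = x i}).toReal)
    (hq : ∀ x, q x = (μ {x}).toReal) :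
    ∀ x : Fin n → V, |p x - q x| ≤ (n : ℝ) * ε := by
  intro x
  have hι : Nonempty (Fin n) := ⟨⟨0, hn⟩⟩
  -- basic bounds on measures
  have hle1 : ∀ s : Set (Fin n → V), (μ s).toReal ≤ 1 := fun s => by
    have := prob_le_one (μ := μ) (s := s)
    simpa using ENNReal.toReal_mono (by simp) this
  have hnn : ∀ s : Set (Fin n → V), 0 ≤ (μ s).toReal := fun s => ENNReal.toReal_nonneg
  -- ε bounds
  have hεle : ∀ i, εi i ≤ ε := fun i => hε ▸ le_ciSup (Set.Finite.bddAbove (Set.finite_range εi)) i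
  have hεnn : 0 ≤ ε := le_trans (hεi_nonneg ⟨0, hn⟩) (hεle ⟨0, hn⟩)
  have h1n : (1:ℝ) ≤ n := by exact_mod_cast hn
  have hnε : ε ≤ (n : ℝ) * ε := by nlinarith
  -- toReal of complement
  have hcompl : ∀ i, (μ {y | y i ≠ xstar i}).toReal = εi i := by
    intro i
    have hm : MeasurableSet {y : Fin n → V | y i = xstar i} := .of_discrete
    have : {y : Fin n → V | y i ≠ xstar i} = {y : Fin n → V | y i = xstar i}ᶜ := rfl
    rw [this, prob_compl_eq_one_sub hm, hεi i]
    rw [ENNReal.toReal_sub_of_le (prob_le_one) (by simp)]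
    simp
  by_cases hx : x = xstar
  · -- both p x and q x lie in [1 - ∑ εi, 1]
    subst hx
    have hpub : p x ≤ 1 := by
      rw [hp]
      exact Finset.prod_le_one (fun i _ => hnn _) (fun i _ => hle1 _)
    have hplb : 1 - ∑ i, εi i ≤ p x := by
      rw [hp]
      have : ∀ i : Fin n, (μ {y | y i = x i}).toReal = 1 - εi i := fun i => by
        rw [hεi i]; ring
      simp_rw [this]
      exact aux_one_sub_sum_le_prod_one_sub _ _ (fun i _ => (hεi_nonneg i))
        (fun i _ => (hεi_lt_one i).le)
    have hqub : q x ≤ 1 := by rw [hq]; exact hle1 _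
    have hqlb : 1 - ∑ i, εi i ≤ q x := by
      rw [hq]
      have hunion : ({x} : Set (Fin n → V))ᶜ ⊆ ⋃ i, {y : Fin n → V | y i ≠ x i} := by
        intro y hy
        simp only [Set.mem_compl_iff, Set.mem_singleton_iff] at hy
        rcases Function.ne_iff.mp hy with ⟨i, hi⟩
        exact Set.mem_iUnion.mpr ⟨i, hi⟩
      have h1 : μ ({x} : Set (Fin n → V))ᶜ ≤ ∑ i, μ {y : Fin n → V | y i ≠ x i} :=
        le_trans (measure_mono hunion) (measure_iUnion_fintype_le μ _)
      have h2 : (μ ({x} : Set (Fin n → V))ᶜ).toReal ≤ ∑ i, εi i := by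
        have := ENNReal.toReal_mono (by
          refine (ENNReal.sum_lt_top.mpr ?_).ne
          intro i _; exact measure_lt_top μ _) h1
        rw [ENNReal.toReal_sum (fun i _ => (measure_lt_top μ _).ne)] at this
        simpa [hcompl] using this
      have h3 : (μ ({x} : Set (Fin n → V))).toReal
          = 1 - (μ ({x} : Set (Fin n → V))ᶜ).toReal := by
        rw [prob_compl_eq_one_sub .of_discrete,
          ENNReal.toReal_sub_of_le prob_le_one (by simp)]
        simp
      rw [h3]; linarith
    have hsum : ∑ i, εi i ≤ (n : ℝ) * ε := by
      calc ∑ i, εi i ≤ ∑ _i : Fin n, ε := Finset.sum_le_sum fun i _ => hεle i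
        _ = (n : ℝ) * ε := by simp [mul_comm]
    rw [abs_sub_le_iff]; constructor <;> linarith
  · -- both p x and q x lie in [0, ε]
    rcases Function.ne_iff.mp hx with ⟨i, hi⟩
    have hdisj : {y : Fin n → V | y i = x i} ⊆ {y : Fin n → V | y i ≠ xstar i} := by
      intro y hy
      simp only [Set.mem_setOf_eq] at hy ⊢
      rw [hy]; exact hi
    have hmi : (μ {y : Fin n → V | y i = x i}).toReal ≤ ε := by
      refine le_trans ?_ (hεle i)
      rw [← hcompl i]
      exact ENNReal.toReal_mono (measure_lt_top μ _).ne (measure_mono hdisj)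
    have hpub : p x ≤ ε := by
      rw [hp]
      refine le_trans ?_ hmi
      rw [← Finset.mul_prod_erase Finset.univ _ (Finset.mem_univ i)]
      calc (μ {y : Fin n → V | y i = x i}).toReal
            * ∏ j ∈ Finset.univ.erase i, (μ {y | y j = x j}).toReal
          ≤ (μ {y : Fin n → V | y i = x i}).toReal * 1 :=
            mul_le_mul_of_nonneg_left
              (Finset.prod_le_one (fun j _ => hnn _) (fun j _ => hle1 _)) (hnn _)
        _ = _ := mul_one _
    have hqub : q x ≤ ε := by
      rw [hq]
      refine le_trans ?_ hmi
      refine ENNReal.toReal_mono (measure_lt_top μ _).ne (measure_mono ?_)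
      intro y hy
      simp only [Set.mem_singleton_iff] at hy
      subst hy; rfl
    have hpnn : 0 ≤ p x := by
      rw [hp]; exact Finset.prod_nonneg fun i _ => hnn _
    have hqnn : 0 ≤ q x := by rw [hq]; exact hnn _
    rw [abs_sub_le_iff]; constructor <;> linarith
end
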